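/- arXiv:2506.21995 — 2 statements merged into one kernel-verified Lean document; each statement's English description precedes it below -/
import Mathlib

section
/- Let d ≥ 0 and let f, g, h ∈ Bₙ be polynomials with f ⊲ g and f ⊲ h, and suppose every nonzero member of the pencil spanned by f and g, and every nonzero member of the pencil spanned by f and h, has root separation strictly greater than d. Then g + h ∈ Bₙ, f ⊲ (g + h), and every nonzero member of the pencil spanned by f and g + h has root separation strictly greater than d. -/
open Polynomial

/-- A real polynomial all of whose roots are real and simple. -/
def SimpleRealRoots (p : Polynomial ℝ) : Prop :=
  p ≠ 0 ∧ p.roots.card = p.natDegree ∧ p.roots.Nodup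

/-- Membership in `Bₙ`: degree `n` or `n - 1` with all roots real and simple. -/
def MemB (n : ℕ) (p : Polynomial ℝ) : Prop :=
  SimpleRealRoots p ∧ (p.natDegree = n ∨ p.natDegree = n - 1)

/-- The minimal distance between distinct real roots of `p`
(`+∞` if `p` has at most one root). -/
noncomputable def rootSep (p : Polynomial ℝ) : ENNReal :=
  ⨅ (s : ℝ) (t : ℝ) (_ : p.IsRoot s) (_ : p.IsRoot t) (_ : s ≠ t), ENNReal.ofReal |s - t|

/-- `f ⊲ g`: every nonzero member of the pencil spanned by `f` and `g` lies in `Bₙ`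
(equivalently the roots strictly interlace), and moreover `g` is negative at the largest
root of `f`; if `deg f = n - 1` (formal largest root `+∞`), instead the leading
coefficient of `g` is negative. -/
def Prec (n : ℕ) (f g : Polynomial ℝ) : Prop :=
  (∀ a b : ℝ, (a, b) ≠ (0, 0) → MemB n (a • f + b • g)) ∧
  (f.natDegree = n →
    ∀ r : ℝ, f.IsRoot r → (∀ r' : ℝ, f.IsRoot r' → r' ≤ r) → g.eval r < 0) ∧
  (f.natDegree = n - 1 → g.leadingCoeff < 0)

/-!
The Wronskian `W(f, p) = f p' - f' p` has no real zero as soon as every nonzero member of the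
pencil of `f` and `p` has simple real roots: a zero of `W` at `x` produces a member with a double
root at `x`. Conversely, if `f` has simple real roots and `W(f, p)` has no real zero, then `p`
changes sign between consecutive roots of `f`, because `W = -f' p` at the roots of `f` and `f'`
alternates there; comparing the signs at the extreme roots of `f` with those at `±∞` supplies
the missing roots, so `p` has simple real roots when `|deg p - deg f| ≤ 1`.

The condition `f ⊲ g` fixes the sign of `W(f, g)`: it is that of `-f'(t) g(t)` at the largest
root `t` of `f`, and that of `lc f · lc g` when `deg f = n - 1`. Hence `W(f, g)` and `W(f, h)`
have the same constant sign, `W(f, a f + b (g + h)) = b (W(f, g) + W(f, h))` has no real zero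
for `b ≠ 0`, and the pencil of `f` and `g + h` lies in `Bₙ`.

For the separation, let `x < y` be roots of `a f + b (g + h)`. The members
`f(x) g - g(x) f` and `f(x) h - h(x) f` of the two given pencils vanish at `x` with slopes
`W(f, g)(x)` and `W(f, h)(x)` of the same sign, and their values at `y` add up to zero. So one
of them has a root in `(x, y]`, at distance more than `d` from `x`.
-/

open Filter Set

theorem mul_pos_of_mul_pos_of_mul_pos {a b c : ℝ} (ha : 0 < a * c) (hb : 0 < b * c) :
    0 < a * b := by
  nlinarith [mul_pos ha hb, sq_nonneg c]

theorem mul_neg_of_mul_pos_of_mul_neg {a b c : ℝ} (ha : 0 < a * c) (hb : b * c < 0) :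
    a * b < 0 := by
  nlinarith [mul_neg_of_pos_of_neg ha hb, sq_nonneg c]

namespace Polynomial

variable {p : ℝ[X]}

theorem eval_mul_eval_pos_of_forall_not_isRoot {a b : ℝ} (h : ∀ z ∈ uIcc a b, ¬ p.IsRoot z) :
    0 < p.eval a * p.eval b := by
  by_contra! hab
  have h0 : (0 : ℝ) ∈ uIcc (p.eval a) (p.eval b) := by
    rcases mul_nonpos_iff.mp hab with ⟨ha, hb⟩ | ⟨ha, hb⟩
    exacts [mem_uIcc.mpr (Or.inr ⟨hb, ha⟩), mem_uIcc.mpr (Or.inl ⟨ha, hb⟩)]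
  obtain ⟨z, hz, hz0⟩ := intermediate_value_uIcc p.continuous.continuousOn h0
  exact h z hz hz0

theorem eval_mul_eval_pos_of_forall_eval_ne_zero (h : ∀ x, p.eval x ≠ 0) (x y : ℝ) :
    0 < p.eval x * p.eval y :=
  eval_mul_eval_pos_of_forall_not_isRoot fun z _ => h z

theorem exists_isRoot_Ioo_of_eval_mul_neg {a b : ℝ} (hab : a < b)
    (h : p.eval a * p.eval b < 0) : ∃ z ∈ Ioo a b, p.IsRoot z := by
  by_contra! hno
  refine (eval_mul_eval_pos_of_forall_not_isRoot fun z hz hroot => ?_).not_gt h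
  rw [uIcc_of_le hab.le] at hz
  rcases hz.1.eq_or_lt with rfl | hza
  · simp_all [IsRoot]
  rcases hz.2.eq_or_lt with rfl | hzb
  · simp_all [IsRoot]
  exact hno z ⟨hza, hzb⟩ hroot

theorem eventually_atTop_eval_mul_leadingCoeff_pos (hp : p ≠ 0) :
    ∀ᶠ x in atTop, 0 < p.eval x * p.leadingCoeff := by
  have hlc : 0 < p.leadingCoeff * p.leadingCoeff := mul_self_pos.mpr (leadingCoeff_ne_zero.mpr hp)
  refine (p.isEquivalent_atTop_lead.mul (Asymptotics.IsEquivalent.refl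
    (u := fun _ => p.leadingCoeff))).eventually_pos ?_
  filter_upwards [eventually_gt_atTop 0] with x hx
  have := mul_pos hlc (pow_pos hx p.natDegree)
  simp only [Pi.mul_apply]
  linarith [show p.leadingCoeff * x ^ p.natDegree * p.leadingCoeff =
    p.leadingCoeff * p.leadingCoeff * x ^ p.natDegree by ring]

theorem eventually_atBot_eval_mul_leadingCoeff_mul_neg_one_pow_pos (hp : p ≠ 0) :
    ∀ᶠ x in atBot, 0 < p.eval x * (p.leadingCoeff * (-1) ^ p.natDegree) := by
  have hlc : 0 < p.leadingCoeff * p.leadingCoeff := mul_self_pos.mpr (leadingCoeff_ne_zero.mpr hp)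
  refine (p.isEquivalent_atBot_lead.mul (Asymptotics.IsEquivalent.refl
    (u := fun _ => p.leadingCoeff * (-1) ^ p.natDegree))).eventually_pos ?_
  filter_upwards [eventually_lt_atBot 0] with x hx
  have := mul_pos hlc (pow_pos (neg_pos.mpr hx) p.natDegree)
  simp only [Pi.mul_apply]
  linarith [show p.leadingCoeff * x ^ p.natDegree * (p.leadingCoeff * (-1) ^ p.natDegree) =
    p.leadingCoeff * p.leadingCoeff * (-x) ^ p.natDegree by rw [neg_pow]; ring]

theorem exists_isRoot_gt_of_eval_mul_leadingCoeff_neg {r : ℝ}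
    (h : p.eval r * p.leadingCoeff < 0) : ∃ z, r < z ∧ p.IsRoot z := by
  have hp : p ≠ 0 := by rintro rfl; simp at h
  obtain ⟨x, hx, hrx⟩ :=
    ((eventually_atTop_eval_mul_leadingCoeff_pos hp).and (eventually_gt_atTop r)).exists
  obtain ⟨z, hz, hroot⟩ := exists_isRoot_Ioo_of_eval_mul_neg hrx
    (by nlinarith [mul_neg_of_pos_of_neg hx h, sq_nonneg p.leadingCoeff])
  exact ⟨z, hz.1, hroot⟩

theorem exists_isRoot_lt_of_eval_mul_leadingCoeff_mul_neg_one_pow_neg {l : ℝ}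
    (h : p.eval l * (p.leadingCoeff * (-1) ^ p.natDegree) < 0) : ∃ z, z < l ∧ p.IsRoot z := by
  have hp : p ≠ 0 := by rintro rfl; simp at h
  obtain ⟨x, hx, hxl⟩ := ((eventually_atBot_eval_mul_leadingCoeff_mul_neg_one_pow_pos hp).and
    (eventually_lt_atBot l)).exists
  obtain ⟨z, hz, hroot⟩ := exists_isRoot_Ioo_of_eval_mul_neg hxl
    (by nlinarith [mul_neg_of_pos_of_neg hx h, sq_nonneg (p.leadingCoeff * (-1) ^ p.natDegree)])
  exact ⟨z, hz.2, hroot⟩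

theorem exists_finset_isRoot_between_of_consecutive (p : ℝ[X]) (s : Finset ℝ)
    (h : ∀ a ∈ s, ∀ b ∈ s, a < b → (∀ c ∈ s, ¬ (a < c ∧ c < b)) → ∃ z ∈ Ioo a b, p.IsRoot z) :
    ∃ I : Finset ℝ, s.card ≤ I.card + 1 ∧
      ∀ z ∈ I, p.IsRoot z ∧ ∃ a ∈ s, ∃ b ∈ s, a < z ∧ z < b := by
  induction s using Finset.induction_on_max with
  | empty => exact ⟨∅, by simp, by simp⟩
  | insert x s hx ih =>
    obtain ⟨I, hcard, hI⟩ := ih fun a ha b hb hab hnone =>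
      h a (Finset.mem_insert_of_mem ha) b (Finset.mem_insert_of_mem hb) hab fun c hc => by
        rcases Finset.mem_insert.mp hc with rfl | hc
        exacts [fun hc' => lt_asymm hc'.2 (hx b hb), hnone c hc]
    have hxs : x ∉ s := fun hxs => lt_irrefl x (hx x hxs)
    rcases s.eq_empty_or_nonempty with rfl | hs
    · exact ⟨∅, by simp, by simp⟩
    have hmax := s.max'_mem hs
    obtain ⟨z, hz, hroot⟩ := h _ (Finset.mem_insert_of_mem hmax) x (Finset.mem_insert_self x s)
      (hx _ hmax) fun c hc ⟨hac, hcx⟩ => by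
        rcases Finset.mem_insert.mp hc with rfl | hc
        exacts [lt_irrefl _ hcx, (s.le_max' c hc).not_gt hac]
    have hzI : z ∉ I := fun hzI => by
      obtain ⟨-, -, -, b, hb, -, hzb⟩ := hI z hzI
      linarith [s.le_max' b hb, hz.1]
    refine ⟨insert z I, ?_, fun w hw => ?_⟩
    · rw [Finset.card_insert_of_notMem hxs, Finset.card_insert_of_notMem hzI]
      omega
    rcases Finset.mem_insert.mp hw with rfl | hw
    · exact ⟨hroot, _, Finset.mem_insert_of_mem hmax, x, Finset.mem_insert_self x s, hz⟩
    · obtain ⟨hr, a, ha, b, hb, hab⟩ := hI w hw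
      exact ⟨hr, a, Finset.mem_insert_of_mem ha, b, Finset.mem_insert_of_mem hb, hab⟩

theorem exists_eq_X_sub_C_mul_and_derivative_eval {r : ℝ} (hr : p.IsRoot r) :
    ∃ q, p = (X - C r) * q ∧ (derivative p).eval r = q.eval r := by
  refine ⟨p /ₘ (X - C r), (mul_divByMonic_eq_iff_isRoot.mpr hr).symm, ?_⟩
  conv_lhs => rw [← mul_divByMonic_eq_iff_isRoot.mpr hr]
  simp

-- On either side of a simple root `r`, up to the nearest other root, `p` has the sign of
-- `(x - r) * p'(r)`.
theorem pos_sub_mul_eval_mul_derivative_eval {r b : ℝ} (hr : p.IsRoot r)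
    (hr' : (derivative p).eval r ≠ 0) (hb : b ≠ r) (h : ∀ z ∈ uIcc r b, p.IsRoot z → z = r) :
    0 < (b - r) * (p.eval b * (derivative p).eval r) := by
  obtain ⟨q, rfl, hq⟩ := exists_eq_X_sub_C_mul_and_derivative_eval hr
  have hpos : 0 < q.eval r * q.eval b := eval_mul_eval_pos_of_forall_not_isRoot fun z hz hqz => by
    obtain rfl := h z hz (by simp [IsRoot, hqz.eq_zero])
    exact hr' (hq ▸ hqz)
  have hbr : 0 < (b - r) * (b - r) := mul_self_pos.mpr (sub_ne_zero.mpr hb)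
  rw [hq, eval_mul]
  simpa [mul_comm, mul_assoc, mul_left_comm] using mul_pos hbr hpos

theorem exists_isRoot_Ioc_of_derivative_eval_mul_eval_nonpos {x y : ℝ} (hx : p.IsRoot x)
    (hx' : (derivative p).eval x ≠ 0) (hxy : x < y) (h : (derivative p).eval x * p.eval y ≤ 0) :
    ∃ z ∈ Ioc x y, p.IsRoot z := by
  obtain ⟨q, rfl, hq⟩ := exists_eq_X_sub_C_mul_and_derivative_eval hx
  rw [hq] at hx' h
  by_contra! hno
  have hpos : 0 < q.eval x * q.eval y := eval_mul_eval_pos_of_forall_not_isRoot fun z hz hqz => by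
    rw [uIcc_of_le hxy.le] at hz
    rcases hz.1.eq_or_lt with rfl | hxz
    · exact hx' hqz
    · exact hno z ⟨hxz, hz.2⟩ (by simp [IsRoot, hqz.eq_zero])
  simp only [eval_mul, eval_sub, eval_X, eval_C] at h
  nlinarith [mul_pos hpos (sub_pos.mpr hxy)]

theorem derivative_eval_mul_neg_of_consecutive_roots {a b : ℝ} (ha : p.IsRoot a)
    (hb : p.IsRoot b) (hab : a < b) (hnone : ∀ c, a < c → c < b → ¬ p.IsRoot c)
    (ha' : (derivative p).eval a ≠ 0) (hb' : (derivative p).eval b ≠ 0) :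
    (derivative p).eval a * (derivative p).eval b < 0 := by
  set w := (a + b) / 2
  have haw : a < w := by simp only [w]; linarith
  have hwb : w < b := by simp only [w]; linarith
  have h1 := pos_sub_mul_eval_mul_derivative_eval ha ha' haw.ne' fun z hz hzr => by
    rw [uIcc_of_le haw.le] at hz
    by_contra hza
    exact hnone z (lt_of_le_of_ne hz.1 (Ne.symm hza)) (hz.2.trans_lt hwb) hzr
  have h2 := pos_sub_mul_eval_mul_derivative_eval hb hb' hwb.ne fun z hz hzr => by
    rw [uIcc_of_ge hwb.le] at hz
    by_contra hzb
    exact hnone z (haw.trans_le hz.1) (lt_of_le_of_ne hz.2 hzb) hzr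
  exact mul_neg_of_mul_pos_of_mul_neg
    (by simpa [mul_comm] using pos_of_mul_pos_right h1 (sub_pos.mpr haw).le)
    (by simpa [mul_comm] using neg_of_mul_pos_right h2 (sub_neg.mpr hwb).le)

theorem derivative_eval_mul_leadingCoeff_pos_of_forall_isRoot_le {r : ℝ} (hr : p.IsRoot r)
    (hr' : (derivative p).eval r ≠ 0) (hmax : ∀ z, p.IsRoot z → z ≤ r) :
    0 < (derivative p).eval r * p.leadingCoeff := by
  have hp : p ≠ 0 := by rintro rfl; simp at hr'
  obtain ⟨x, hx, hrx⟩ :=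
    ((eventually_atTop_eval_mul_leadingCoeff_pos hp).and (eventually_gt_atTop r)).exists
  have h := pos_sub_mul_eval_mul_derivative_eval hr hr' hrx.ne' fun z hz hzr =>
    le_antisymm (hmax z hzr) (uIcc_of_le hrx.le ▸ hz).1
  have hfx : 0 < (derivative p).eval r * p.eval x := by
    simpa [mul_comm] using pos_of_mul_pos_right h (sub_pos.mpr hrx).le
  exact mul_pos_of_mul_pos_of_mul_pos hfx (by simpa [mul_comm] using hx)

theorem derivative_eval_mul_leadingCoeff_mul_neg_one_pow_neg_of_forall_le_isRoot {l : ℝ}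
    (hl : p.IsRoot l) (hl' : (derivative p).eval l ≠ 0) (hmin : ∀ z, p.IsRoot z → l ≤ z) :
    (derivative p).eval l * (p.leadingCoeff * (-1) ^ p.natDegree) < 0 := by
  have hp : p ≠ 0 := by rintro rfl; simp at hl'
  obtain ⟨x, hx, hxl⟩ := ((eventually_atBot_eval_mul_leadingCoeff_mul_neg_one_pow_pos hp).and
    (eventually_lt_atBot l)).exists
  have h := pos_sub_mul_eval_mul_derivative_eval hl hl' hxl.ne fun z hz hzr =>
    le_antisymm (uIcc_of_ge hxl.le ▸ hz).2 (hmin z hzr)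
  have hfx : (derivative p).eval l * p.eval x < 0 := by
    simpa [mul_comm] using neg_of_mul_pos_right h (sub_neg.mpr hxl).le
  rw [mul_comm]
  exact mul_neg_of_mul_pos_of_mul_neg (by simpa [mul_comm] using hx) hfx

theorem exists_isRoot_forall_isRoot_mem_Icc (hp : p ≠ 0) {z : ℝ} (hz : p.IsRoot z) :
    ∃ l r, p.IsRoot l ∧ p.IsRoot r ∧ ∀ w, p.IsRoot w → w ∈ Icc l r := by
  obtain ⟨l, hl, hmin⟩ := exists_min_image _ id (finite_setOfPred_isRoot hp) ⟨z, hz⟩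
  obtain ⟨r, hr, hmax⟩ := exists_max_image _ id (finite_setOfPred_isRoot hp) ⟨z, hz⟩
  exact ⟨l, r, hl, hr, fun w hw => ⟨hmin w hw, hmax w hw⟩⟩

theorem wronskian_eval_of_isRoot {f g : ℝ[X]} {r : ℝ} (hr : f.IsRoot r) :
    (wronskian f g).eval r = -((derivative f).eval r * g.eval r) := by
  simp [wronskian, hr.eq_zero]

theorem wronskian_smul_self_add_smul (f g : ℝ[X]) (a b : ℝ) :
    wronskian f (a • f + b • g) = b • wronskian f g := by
  rw [← wronskianBilin_apply, map_add, map_smul, map_smul, wronskianBilin_apply,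
    wronskianBilin_apply, wronskian_self_eq_zero, smul_zero, zero_add]

theorem leadingCoeff_wronskian_of_natDegree_eq_succ {f g : ℝ[X]} (hf : f ≠ 0)
    (hg : g.natDegree = f.natDegree + 1) :
    (wronskian f g).leadingCoeff = f.leadingCoeff * g.leadingCoeff := by
  set m := f.natDegree
  have hg0 : g ≠ 0 := by rintro rfl; simp at hg
  have h1 : (f * derivative g).coeff (m + m) = f.leadingCoeff * (g.leadingCoeff * (m + 1)) := by
    rw [coeff_mul_add_eq_of_natDegree_le le_rfl ((natDegree_derivative_le g).trans (by omega)),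
      coeff_derivative, ← hg]
    rfl
  have h2 :
      (derivative (f * g)).coeff (m + m) = f.leadingCoeff * g.leadingCoeff * (m + m + 1) := by
    rw [coeff_derivative, add_assoc, coeff_mul_add_eq_of_natDegree_le le_rfl hg.le, ← hg]
    push_cast
    rfl
  have hcoeff : (wronskian f g).coeff (m + m) = f.leadingCoeff * g.leadingCoeff := by
    rw [show wronskian f g = f * derivative g + f * derivative g - derivative (f * g) by
      rw [wronskian, derivative_mul]; ring, coeff_sub, coeff_add, h1, h2]
    ring
  have hne : (wronskian f g).coeff (m + m) ≠ 0 := by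
    rw [hcoeff]; exact mul_ne_zero (leadingCoeff_ne_zero.mpr hf) (leadingCoeff_ne_zero.mpr hg0)
  have hW : wronskian f g ≠ 0 := fun h0 => hne (by rw [h0, coeff_zero])
  have hdeg : (wronskian f g).natDegree = m + m :=
    le_antisymm (by have := natDegree_wronskian_lt_add hW; omega) (le_natDegree_of_ne_zero hne)
  rw [leadingCoeff, hdeg, hcoeff]

end Polynomial

namespace SimpleRealRoots

variable {f p : ℝ[X]}

theorem of_natDegree_le_card (hp : p ≠ 0) {F : Finset ℝ}
    (hF : ∀ z ∈ F, p.IsRoot z) (h : p.natDegree ≤ F.card) : SimpleRealRoots p := by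
  have hsub : F.val ⊆ p.roots := fun z hz => (mem_roots hp).mpr (hF z hz)
  have hroots : F.val = p.roots :=
    Multiset.eq_of_le_of_card_le (Finset.val_le_iff_val_subset.mpr hsub) (p.card_roots'.trans h)
  refine ⟨hp, ?_, hroots ▸ F.nodup⟩
  rw [← hroots, Finset.card_val]
  exact le_antisymm (card_le_degree_of_subset_roots hsub) h

theorem of_natDegree_le_one (hp : p ≠ 0) (h : p.natDegree ≤ 1) :
    SimpleRealRoots p := by
  rcases h.lt_or_eq with h0 | h1
  · exact .of_natDegree_le_card hp (F := ∅) (by simp) (by rw [Finset.card_empty]; omega)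
  · obtain ⟨x, hx⟩ := exists_root_of_degree_eq_one ((degree_eq_iff_natDegree_eq hp).mpr h1)
    exact .of_natDegree_le_card hp (F := {x}) (by simpa) (by simp [h1])

theorem derivative_eval_ne_zero (h : SimpleRealRoots p) {x : ℝ}
    (hx : p.IsRoot x) : (derivative p).eval x ≠ 0 := fun h' => by
  have h1 : 1 < p.roots.count x := by
    rw [count_roots]
    exact (one_lt_rootMultiplicity_iff_isRoot h.1).mpr ⟨hx, h'⟩
  have := Multiset.nodup_iff_count_le_one.mp h.2.2 x
  omega

theorem exists_finset_isRoot_between (hf : SimpleRealRoots f)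
    (hW : ∀ x, (wronskian f p).eval x ≠ 0) :
    ∃ I : Finset ℝ, f.natDegree ≤ I.card + 1 ∧
      ∀ z ∈ I, p.IsRoot z ∧ ∃ a b, f.IsRoot a ∧ f.IsRoot b ∧ a < z ∧ z < b := by
  have hR : ∀ z, z ∈ f.roots.toFinset ↔ f.IsRoot z := by simp [mem_roots hf.1]
  obtain ⟨I, hcard, hI⟩ := exists_finset_isRoot_between_of_consecutive p f.roots.toFinset
    fun a ha b hb hab hnone => by
      rw [hR] at ha hb
      have hf' := derivative_eval_mul_neg_of_consecutive_roots ha hb hab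
        (fun c hac hcb hc => hnone c ((hR c).mpr hc) ⟨hac, hcb⟩)
        (hf.derivative_eval_ne_zero ha) (hf.derivative_eval_ne_zero hb)
      have hWab := eval_mul_eval_pos_of_forall_eval_ne_zero hW a b
      rw [wronskian_eval_of_isRoot ha, wronskian_eval_of_isRoot hb] at hWab
      exact exists_isRoot_Ioo_of_eval_mul_neg hab (by nlinarith)
  refine ⟨I, ?_, fun z hz => ?_⟩
  · rwa [Multiset.toFinset_card_of_nodup hf.2.2, hf.2.1] at hcard
  · obtain ⟨hroot, a, ha, b, hb, hab⟩ := hI z hz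
    exact ⟨hroot, a, b, (hR a).mp ha, (hR b).mp hb, hab⟩

theorem exists_isRoot_gt_or_lt_of_natDegree_eq (hf : SimpleRealRoots f)
    (hW : ∀ x, (wronskian f p).eval x ≠ 0) (hdeg : p.natDegree = f.natDegree) {l r : ℝ}
    (hr : f.IsRoot r) (hmax : ∀ z, f.IsRoot z → z ≤ r)
    (hl : f.IsRoot l) (hmin : ∀ z, f.IsRoot z → l ≤ z) :
    (∃ z, r < z ∧ p.IsRoot z) ∨ ∃ z, z < l ∧ p.IsRoot z := by
  by_cases hright : p.eval r * p.leadingCoeff < 0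
  · exact Or.inl (exists_isRoot_gt_of_eval_mul_leadingCoeff_neg hright)
  refine Or.inr (exists_isRoot_lt_of_eval_mul_leadingCoeff_mul_neg_one_pow_neg ?_)
  set ε : ℝ := (-1) ^ f.natDegree
  have hε : ε * ε = 1 := by rw [← mul_pow]; norm_num
  have hsr := derivative_eval_mul_leadingCoeff_pos_of_forall_isRoot_le hr
    (hf.derivative_eval_ne_zero hr) hmax
  have hsl := derivative_eval_mul_leadingCoeff_mul_neg_one_pow_neg_of_forall_le_isRoot hl
    (hf.derivative_eval_ne_zero hl) hmin
  have hWrl := eval_mul_eval_pos_of_forall_eval_ne_zero hW r l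
  rw [wronskian_eval_of_isRoot hr, wronskian_eval_of_isRoot hl] at hWrl
  have hlc : p.leadingCoeff ≠ 0 := leadingCoeff_ne_zero.mpr (by rintro rfl; simpa using hW 0)
  have hpr : 0 < p.eval r * p.leadingCoeff :=
    (not_lt.mp hright).lt_of_ne' (mul_ne_zero (fun h0 => by simp [h0] at hWrl) hlc)
  have hf' : (derivative f).eval r * ((derivative f).eval l * ε) < 0 :=
    mul_neg_of_mul_pos_of_mul_neg hsr (by linarith [hsl])
  have hprod : 0 < (p.eval r * p.leadingCoeff * ((derivative f).eval r *
      ((derivative f).eval l * ε))) * (p.eval l * (p.leadingCoeff * ε)) := by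
    have e : (p.eval r * p.leadingCoeff * ((derivative f).eval r *
        ((derivative f).eval l * ε))) * (p.eval l * (p.leadingCoeff * ε)) =
        -((derivative f).eval r * p.eval r) * -((derivative f).eval l * p.eval l) *
          (p.leadingCoeff * p.leadingCoeff) * (ε * ε) := by ring
    rw [e, hε, mul_one]
    exact mul_pos hWrl (mul_self_pos.mpr hlc)
  rw [hdeg]
  exact neg_of_mul_pos_right hprod (mul_neg_of_pos_of_neg hpr hf').le

theorem exists_isRoot_gt_and_lt_of_natDegree_eq_succ (hf : SimpleRealRoots f)
    (hW : ∀ x, (wronskian f p).eval x ≠ 0) (hdeg : p.natDegree = f.natDegree + 1) {l r : ℝ}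
    (hr : f.IsRoot r) (hmax : ∀ z, f.IsRoot z → z ≤ r)
    (hl : f.IsRoot l) (hmin : ∀ z, f.IsRoot z → l ≤ z) :
    (∃ z, r < z ∧ p.IsRoot z) ∧ ∃ z, z < l ∧ p.IsRoot z := by
  set ε : ℝ := (-1) ^ f.natDegree
  have hε : ε * ε = 1 := by rw [← mul_pow]; norm_num
  have hsr := derivative_eval_mul_leadingCoeff_pos_of_forall_isRoot_le hr
    (hf.derivative_eval_ne_zero hr) hmax
  have hsl := derivative_eval_mul_leadingCoeff_mul_neg_one_pow_neg_of_forall_le_isRoot hl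
    (hf.derivative_eval_ne_zero hl) hmin
  have hW0 : wronskian f p ≠ 0 := fun h0 => hW 0 (by rw [h0, eval_zero])
  obtain ⟨x, hx⟩ := (eventually_atTop_eval_mul_leadingCoeff_pos hW0).exists
  rw [leadingCoeff_wronskian_of_natDegree_eq_succ hf.1 hdeg] at hx
  have hWr := mul_pos_of_mul_pos_of_mul_pos (eval_mul_eval_pos_of_forall_eval_ne_zero hW r x)
    (by rwa [mul_comm] at hx)
  have hWl := mul_pos_of_mul_pos_of_mul_pos (eval_mul_eval_pos_of_forall_eval_ne_zero hW l x)
    (by rwa [mul_comm] at hx)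
  rw [wronskian_eval_of_isRoot hr] at hWr
  rw [wronskian_eval_of_isRoot hl] at hWl
  constructor
  · refine exists_isRoot_gt_of_eval_mul_leadingCoeff_neg (neg_of_mul_neg_right ?_ hsr.le)
    linarith
  · refine exists_isRoot_lt_of_eval_mul_leadingCoeff_mul_neg_one_pow_neg ?_
    rw [hdeg, pow_succ]
    refine neg_of_mul_pos_right ?_ hsl.le
    have e : (derivative f).eval l * (f.leadingCoeff * ε) *
        (p.eval l * (p.leadingCoeff * (ε * -1))) =
        -((derivative f).eval l * p.eval l) * (f.leadingCoeff * p.leadingCoeff) * (ε * ε) := by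
      ring
    rwa [e, hε, mul_one]

theorem of_wronskian_eval_ne_zero (hf : SimpleRealRoots f)
    (hW : ∀ x, (wronskian f p).eval x ≠ 0) (hdeg : p.natDegree ≤ f.natDegree + 1) :
    SimpleRealRoots p ∧ f.natDegree ≤ p.natDegree + 1 := by
  have hp : p ≠ 0 := by rintro rfl; simpa using hW 0
  obtain ⟨I, hIcard, hI⟩ := hf.exists_finset_isRoot_between hW
  have hIp : I.card ≤ p.natDegree :=
    card_le_degree_of_subset_roots fun z hz => (mem_roots hp).mpr (hI z hz).1
  refine ⟨?_, by omega⟩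
  by_cases hsmall : p.natDegree ≤ I.card
  · exact .of_natDegree_le_card hp (fun z hz => (hI z hz).1) hsmall
  rcases em (∃ z, f.IsRoot z) with ⟨z₀, hz₀⟩ | hnone
  swap
  · have hf0 : f.natDegree = 0 := by
      rw [← hf.2.1, Multiset.card_eq_zero]
      exact Multiset.eq_zero_of_forall_notMem fun z hz => hnone ⟨z, (mem_roots hf.1).mp hz⟩
    exact .of_natDegree_le_one hp (by omega)
  obtain ⟨l, r, hl, hr, hlr⟩ := exists_isRoot_forall_isRoot_mem_Icc hf.1 hz₀
  have hIlr : ∀ z ∈ I, l < z ∧ z < r := fun z hz => by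
    obtain ⟨-, a, b, ha, hb, haz, hzb⟩ := hI z hz
    exact ⟨(hlr a ha).1.trans_lt haz, hzb.trans_le (hlr b hb).2⟩
  have hmin : ∀ z, f.IsRoot z → l ≤ z := fun z hz => (hlr z hz).1
  have hmax : ∀ z, f.IsRoot z → z ≤ r := fun z hz => (hlr z hz).2
  have hI' : ∀ z ∈ I, p.IsRoot z := fun z hz => (hI z hz).1
  obtain hm | hm : p.natDegree = f.natDegree ∨ p.natDegree = f.natDegree + 1 := by omega
  · obtain ⟨z, hzI, hz⟩ : ∃ z ∉ I, p.IsRoot z := by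
      rcases exists_isRoot_gt_or_lt_of_natDegree_eq hf hW hm hr hmax hl hmin with
        ⟨z, hrz, hz⟩ | ⟨z, hzl, hz⟩
      · exact ⟨z, fun hzI => (hIlr z hzI).2.not_gt hrz, hz⟩
      · exact ⟨z, fun hzI => (hIlr z hzI).1.not_gt hzl, hz⟩
    exact .of_natDegree_le_card hp (Finset.forall_mem_insert _ _ _ |>.mpr ⟨hz, hI'⟩)
      (by rw [Finset.card_insert_of_notMem hzI]; omega)
  · obtain ⟨⟨z, hrz, hz⟩, ⟨w, hwl, hw⟩⟩ :=
      exists_isRoot_gt_and_lt_of_natDegree_eq_succ hf hW hm hr hmax hl hmin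
    have hzI : z ∉ I := fun hzI => (hIlr z hzI).2.not_gt hrz
    have hwzI : w ∉ insert z I := by
      simp only [Finset.mem_insert, not_or]
      exact ⟨by linarith [hmin r hr], fun hwI => (hIlr w hwI).1.not_gt hwl⟩
    refine .of_natDegree_le_card hp (F := insert w (insert z I)) ?_ ?_
    · simp only [Finset.forall_mem_insert]
      exact ⟨hw, hz, hI'⟩
    · rw [Finset.card_insert_of_notMem hwzI, Finset.card_insert_of_notMem hzI]; omega

end SimpleRealRoots

theorem wronskian_eval_ne_zero_of_pencil {f g : ℝ[X]}
    (h : ∀ a b : ℝ, (a, b) ≠ (0, 0) → SimpleRealRoots (a • f + b • g)) (x : ℝ) :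
    (wronskian f g).eval x ≠ 0 := by
  intro hW
  simp only [wronskian, eval_sub, eval_mul] at hW
  obtain ⟨a, b, hab, hq, hq'⟩ : ∃ a b : ℝ, (a, b) ≠ (0, 0) ∧ a * f.eval x + b * g.eval x = 0 ∧
      a * (derivative f).eval x + b * (derivative g).eval x = 0 := by
    by_cases hfg : f.eval x = 0 ∧ g.eval x = 0
    · by_cases hf' : (derivative f).eval x = 0
      · exact ⟨1, 0, by simp, by simp [hfg.1], by simp [hf']⟩
      · exact ⟨(derivative g).eval x, -(derivative f).eval x, by simp [hf'], by simp [hfg],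
          by ring⟩
    · refine ⟨g.eval x, -f.eval x, fun h0 => hfg ?_, by ring, by linarith⟩
      simp only [Prod.mk.injEq, neg_eq_zero] at h0
      exact h0.symm
  exact (h a b hab).derivative_eval_ne_zero (x := x) (by simpa [IsRoot] using hq)
    (by simpa using hq')

theorem rootSep_le {p : ℝ[X]} {s t : ℝ} (hs : p.IsRoot s) (ht : p.IsRoot t) (hst : s ≠ t) :
    rootSep p ≤ ENNReal.ofReal |s - t| :=
  iInf_le_of_le s <| iInf_le_of_le t <| iInf_le_of_le hs <| iInf_le_of_le ht <| iInf_le _ hst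

theorem lt_sub_of_ofReal_lt_rootSep {p : ℝ[X]} {d s t : ℝ} (h : ENNReal.ofReal d < rootSep p)
    (hs : p.IsRoot s) (ht : p.IsRoot t) (hst : s < t) : d < t - s := by
  have := h.trans_le (rootSep_le ht hs hst.ne')
  rw [abs_of_pos (sub_pos.mpr hst)] at this
  exact (ENNReal.ofReal_lt_ofReal_iff'.mp this).1

theorem ofReal_lt_rootSep {p : ℝ[X]} (hp : p ≠ 0) {d : ℝ}
    (h : ∀ s t, p.IsRoot s → p.IsRoot t → s < t → d < t - s) :
    ENNReal.ofReal d < rootSep p := by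
  classical
  set T := (p.roots.toFinset ×ˢ p.roots.toFinset).filter fun q => q.1 ≠ q.2
  calc ENNReal.ofReal d < T.inf fun q => ENNReal.ofReal |q.1 - q.2| := by
        rw [Finset.lt_inf_iff ENNReal.ofReal_lt_top]
        rintro ⟨s, t⟩ hq
        simp only [T, Finset.mem_filter, Finset.mem_product, Multiset.mem_toFinset,
          mem_roots hp] at hq
        obtain ⟨⟨hs, ht⟩, hst⟩ := hq
        rw [ENNReal.ofReal_lt_ofReal_iff (abs_pos.mpr (sub_ne_zero.mpr hst))]
        rcases hst.lt_or_gt with hst | hst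
        · rw [abs_sub_comm, abs_of_pos (sub_pos.mpr hst)]; exact h s t hs ht hst
        · rw [abs_of_pos (sub_pos.mpr hst)]; exact h t s ht hs hst
    _ ≤ rootSep p := le_iInf fun s => le_iInf fun t => le_iInf fun hs => le_iInf fun ht =>
        le_iInf fun hst =>
          Finset.inf_le (b := (s, t)) (by simp [T, mem_roots hp, hs.eq_zero, ht.eq_zero, hst])

theorem natDegree_eq_of_pencil_of_natDegree_eq_pred {n : ℕ} (hn : 0 < n) {f g : ℝ[X]}
    (hf : f.natDegree = n - 1)
    (hpencil : ∀ a b : ℝ, (a, b) ≠ (0, 0) → MemB n (a • f + b • g)) : g.natDegree = n := by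
  have hg : MemB n g := by simpa using hpencil 0 1 (by simp)
  refine hg.2.resolve_right fun hg' => ?_
  have hf0 : f ≠ 0 := by simpa using (hpencil 1 0 (by simp)).1.1
  have hq := hpencil g.leadingCoeff (-f.leadingCoeff) (by simp [hf0])
  set q := g.leadingCoeff • f + (-f.leadingCoeff) • g
  have hle : q.natDegree ≤ n - 1 := natDegree_add_le_of_degree_le
    ((natDegree_smul_le _ _).trans hf.le) ((natDegree_smul_le _ _).trans hg'.le)
  have hcoeff : q.coeff (n - 1) = 0 := by
    have hcf : f.coeff (n - 1) = f.leadingCoeff := by rw [← hf]; rfl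
    have hcg : g.coeff (n - 1) = g.leadingCoeff := by rw [← hg']; rfl
    simp only [q, coeff_add, coeff_smul, hcf, hcg, smul_eq_mul]
    ring
  rcases hq.2 with hqn | hqn
  · omega
  · exact hq.1.1 (leadingCoeff_eq_zero.mp (by rw [leadingCoeff, hqn, hcoeff]))

theorem wronskian_eval_mul_wronskian_eval_pos {n : ℕ} (hn : 0 < n) {f g h : ℝ[X]}
    (hf : MemB n f) (hfg : Prec n f g) (hfh : Prec n f h) (x : ℝ) :
    0 < (wronskian f g).eval x * (wronskian f h).eval x := by
  have hWg := wronskian_eval_ne_zero_of_pencil fun a b hab => (hfg.1 a b hab).1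
  have hWh := wronskian_eval_ne_zero_of_pencil fun a b hab => (hfh.1 a b hab).1
  suffices ∃ y, 0 < (wronskian f g).eval y * (wronskian f h).eval y by
    obtain ⟨y, hy⟩ := this
    have := eval_mul_eval_pos_of_forall_eval_ne_zero (p := wronskian f g * wronskian f h)
      (fun z => by rw [eval_mul]; exact mul_ne_zero (hWg z) (hWh z)) x y
    rw [eval_mul, eval_mul] at this
    exact pos_of_mul_pos_left this hy.le
  rcases hf.2 with hdeg | hdeg
  · obtain ⟨z, hz⟩ := Multiset.card_pos_iff_exists_mem.mp (by rw [hf.1.2.1]; omega)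
    obtain ⟨l, t, -, ht, hbound⟩ :=
      exists_isRoot_forall_isRoot_mem_Icc hf.1.1 ((mem_roots hf.1.1).mp hz)
    have htmax : ∀ z, f.IsRoot z → z ≤ t := fun z hz => (hbound z hz).2
    refine ⟨t, ?_⟩
    rw [wronskian_eval_of_isRoot ht, wronskian_eval_of_isRoot ht]
    have := mul_self_pos.mpr (hf.1.derivative_eval_ne_zero ht)
    nlinarith [mul_pos_of_neg_of_neg (hfg.2.1 hdeg t ht htmax) (hfh.2.1 hdeg t ht htmax)]
  · have hlf := leadingCoeff_ne_zero.mpr hf.1.1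
    have hlgh := mul_pos_of_neg_of_neg (hfg.2.2 hdeg) (hfh.2.2 hdeg)
    have hgn := natDegree_eq_of_pencil_of_natDegree_eq_pred hn hdeg hfg.1
    have hhn := natDegree_eq_of_pencil_of_natDegree_eq_pred hn hdeg hfh.1
    have hWg0 : wronskian f g ≠ 0 := fun h0 => hWg 0 (by rw [h0, eval_zero])
    have hWh0 : wronskian f h ≠ 0 := fun h0 => hWh 0 (by rw [h0, eval_zero])
    obtain ⟨y, hyg, hyh⟩ := ((eventually_atTop_eval_mul_leadingCoeff_pos hWg0).and
      (eventually_atTop_eval_mul_leadingCoeff_pos hWh0)).exists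
    rw [leadingCoeff_wronskian_of_natDegree_eq_succ hf.1.1 (by omega)] at hyg hyh
    exact ⟨y, by nlinarith [mul_pos hyg hyh, mul_pos (mul_self_pos.mpr hlf) hlgh]⟩

theorem memB_smul_add_smul_add {n : ℕ} (hn : 0 < n) {f g h : ℝ[X]}
    (hf : MemB n f) (hg : MemB n g) (hh : MemB n h) (hfg : Prec n f g) (hfh : Prec n f h)
    (a b : ℝ) (hab : (a, b) ≠ (0, 0)) : MemB n (a • f + b • (g + h)) := by
  by_cases hb : b = 0
  · subst hb
    simpa using hfg.1 a 0 hab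
  have hW : ∀ x, (wronskian f (a • f + b • (g + h))).eval x ≠ 0 := fun x => by
    have := wronskian_eval_mul_wronskian_eval_pos hn hf hfg hfh x
    rw [wronskian_smul_self_add_smul, wronskian_add_right, eval_smul, eval_add, smul_eq_mul]
    refine mul_ne_zero hb fun h0 => ?_
    rw [show (wronskian f h).eval x = -(wronskian f g).eval x by linarith] at this
    nlinarith [sq_nonneg ((wronskian f g).eval x)]
  have hdeg : (a • f + b • (g + h)).natDegree ≤ n := by
    have hn' : ∀ {p : ℝ[X]}, MemB n p → p.natDegree ≤ n := fun hp => by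
      rcases hp.2 with h | h <;> omega
    exact natDegree_add_le_of_degree_le ((natDegree_smul_le _ _).trans (hn' hf))
      ((natDegree_smul_le _ _).trans (natDegree_add_le_of_degree_le (hn' hg) (hn' hh)))
  obtain ⟨hsimple, hfq⟩ := hf.1.of_wronskian_eval_ne_zero hW (by rcases hf.2 with h | h <;> omega)
  refine ⟨hsimple, ?_⟩
  rcases hf.2 with hfd | hfd
  · omega
  have hgn := natDegree_eq_of_pencil_of_natDegree_eq_pred hn hfd hfg.1
  have hhn := natDegree_eq_of_pencil_of_natDegree_eq_pred hn hfd hfh.1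
  have hcoeff : (a • f + b • (g + h)).coeff n = b * (g.leadingCoeff + h.leadingCoeff) := by
    have hcg : g.coeff n = g.leadingCoeff := by rw [← hgn]; rfl
    have hch : h.coeff n = h.leadingCoeff := by rw [← hhn]; rfl
    rw [coeff_add, coeff_smul, coeff_smul, coeff_add, coeff_eq_zero_of_natDegree_lt (by omega),
      hcg, hch, smul_zero, zero_add, smul_eq_mul]
  refine Or.inl (le_antisymm hdeg (le_natDegree_of_ne_zero ?_))
  rw [hcoeff]
  exact mul_ne_zero hb (by linarith [hfg.2.2 hfd, hfh.2.2 hfd])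

theorem lt_sub_of_pencil_ofReal_lt_rootSep {d : ℝ} {f k : ℝ[X]}
    (hsep : ∀ a b : ℝ, (a, b) ≠ (0, 0) → ENNReal.ofReal d < rootSep (a • f + b • k))
    {x y : ℝ} (hfx : f.eval x ≠ 0) (hW : (wronskian f k).eval x ≠ 0) (hxy : x < y)
    (h : (wronskian f k).eval x * (f.eval x * k.eval y - k.eval x * f.eval y) ≤ 0) :
    d < y - x := by
  set M := (-k.eval x) • f + f.eval x • k
  have hM : M.IsRoot x := by
    simp only [M, IsRoot, eval_add, eval_smul, smul_eq_mul]
    ring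
  have hM' : (derivative M).eval x = (wronskian f k).eval x := by
    simp only [M, wronskian, derivative_add, derivative_smul, eval_add, eval_sub, eval_mul,
      eval_smul, smul_eq_mul]
    ring
  have hMy : M.eval y = f.eval x * k.eval y - k.eval x * f.eval y := by
    simp only [M, eval_add, eval_smul, smul_eq_mul]
    ring
  obtain ⟨z, hz, hzroot⟩ := exists_isRoot_Ioc_of_derivative_eval_mul_eval_nonpos hM
    (hM' ▸ hW) hxy (by rwa [hM', hMy])
  have := lt_sub_of_ofReal_lt_rootSep (hsep _ _ (by simp [hfx])) hM hzroot hz.1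
  linarith [hz.2]

theorem lt_sub_of_isRoot_smul_add_smul_add {d : ℝ} {f g h : ℝ[X]}
    (hsepg : ∀ a b : ℝ, (a, b) ≠ (0, 0) → ENNReal.ofReal d < rootSep (a • f + b • g))
    (hseph : ∀ a b : ℝ, (a, b) ≠ (0, 0) → ENNReal.ofReal d < rootSep (a • f + b • h))
    (horient : ∀ x, 0 < (wronskian f g).eval x * (wronskian f h).eval x)
    {a b x y : ℝ} (hb : b ≠ 0) (hx : (a • f + b • (g + h)).IsRoot x)
    (hy : (a • f + b • (g + h)).IsRoot y) (hxy : x < y) : d < y - x := by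
  simp only [IsRoot, eval_add, eval_smul, smul_eq_mul] at hx hy
  have hfx : f.eval x ≠ 0 := fun h0 => by
    have hgh : h.eval x = -g.eval x := by
      have := mul_eq_zero.mp (show b * (g.eval x + h.eval x) = 0 by simpa [h0] using hx)
      linarith [this.resolve_left hb]
    have := horient x
    rw [wronskian_eval_of_isRoot h0, wronskian_eval_of_isRoot h0, hgh] at this
    nlinarith [sq_nonneg ((derivative f).eval x * g.eval x)]
  have hsum : (f.eval x * h.eval y - h.eval x * f.eval y) =
      -(f.eval x * g.eval y - g.eval x * f.eval y) := by
    apply mul_left_cancel₀ hb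
    linear_combination f.eval x * hy - f.eval y * hx
  have hprod : ((wronskian f g).eval x * (f.eval x * g.eval y - g.eval x * f.eval y)) *
      ((wronskian f h).eval x * (f.eval x * h.eval y - h.eval x * f.eval y)) ≤ 0 := by
    rw [hsum]
    nlinarith [horient x, sq_nonneg (f.eval x * g.eval y - g.eval x * f.eval y)]
  rcases mul_nonpos_iff.mp hprod with ⟨-, hneg⟩ | ⟨hneg, -⟩
  · exact lt_sub_of_pencil_ofReal_lt_rootSep hseph hfx (right_ne_zero_of_mul (horient x).ne')
      hxy hneg
  · exact lt_sub_of_pencil_ofReal_lt_rootSep hsepg hfx (left_ne_zero_of_mul (horient x).ne')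
      hxy hneg

theorem stmt6_general (n : ℕ) (hn : 0 < n) (d : ℝ) (f g h : Polynomial ℝ)
    (hf : MemB n f) (hg : MemB n g) (hh : MemB n h)
    (hfg : Prec n f g) (hfh : Prec n f h)
    (hsepg : ∀ a b : ℝ, (a, b) ≠ (0, 0) → ENNReal.ofReal d < rootSep (a • f + b • g))
    (hseph : ∀ a b : ℝ, (a, b) ≠ (0, 0) → ENNReal.ofReal d < rootSep (a • f + b • h)) :
    MemB n (g + h) ∧ Prec n f (g + h) ∧
    ∀ a b : ℝ, (a, b) ≠ (0, 0) → ENNReal.ofReal d < rootSep (a • f + b • (g + h)) := by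
  have hpencil := memB_smul_add_smul_add hn hf hg hh hfg hfh
  refine ⟨by simpa using hpencil 0 1 (by simp), ⟨hpencil, fun hdeg r hr hmax => ?_, fun hdeg => ?_⟩,
    fun a b hab => ?_⟩
  · rw [eval_add]
    linarith [hfg.2.1 hdeg r hr hmax, hfh.2.1 hdeg r hr hmax]
  · have hgn := natDegree_eq_of_pencil_of_natDegree_eq_pred hn hdeg hfg.1
    have hhn := natDegree_eq_of_pencil_of_natDegree_eq_pred hn hdeg hfh.1
    have hlc := add_neg (hfg.2.2 hdeg) (hfh.2.2 hdeg)
    rwa [leadingCoeff_add_of_degree_eq (by rw [degree_eq_natDegree hg.1.1,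
      degree_eq_natDegree hh.1.1, hgn, hhn]) hlc.ne]
  · by_cases hb : b = 0
    · subst hb
      simpa using hsepg a 0 hab
    exact ofReal_lt_rootSep (hpencil a b hab).1.1 fun s t hs ht hst =>
      lt_sub_of_isRoot_smul_add_smul_add hsepg hseph
        (wronskian_eval_mul_wronskian_eval_pos hn hf hfg hfh) hb hs ht hst

theorem stmt6 (n : ℕ) (hn : 0 < n) (d : ℝ) (hd : 0 ≤ d) (f g h : Polynomial ℝ)
    (hf : MemB n f) (hg : MemB n g) (hh : MemB n h)
    (hfg : Prec n f g) (hfh : Prec n f h)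
    (hsepg : ∀ a b : ℝ, (a, b) ≠ (0, 0) → ENNReal.ofReal d < rootSep (a • f + b • g))
    (hseph : ∀ a b : ℝ, (a, b) ≠ (0, 0) → ENNReal.ofReal d < rootSep (a • f + b • h)) :
    MemB n (g + h) ∧ Prec n f (g + h) ∧
    ∀ a b : ℝ, (a, b) ≠ (0, 0) → ENNReal.ofReal d < rootSep (a • f + b • (g + h)) :=
  stmt6_general n hn d f g h hf hg hh hfg hfh hsepg hseph
end

section
/- Let f, g be real monic polynomials of degree n, both with all roots real and simple, whose roots satisfy s₁ < t₁ < s₂ < t₂ < … < sₙ < tₙ where sᵢ are the roots of f and tᵢ the roots of g. Let d be a real number strictly less than the root separation of the pencil spanned by f and g. Then there exists N₀ such that for all N > N₀: every nonzero polynomial of the form a·f(x) + b·(x+N)·g(x) has all roots real and simple with pairwise gaps strictly greater than d. -/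
open Polynomial

/-!
For `b ≠ 0` the polynomial is `b` times the monic `P = c f + (X + N) g` of degree `n + 1`.
Since `P(sᵢ) = (sᵢ + N) g(sᵢ)` alternates in sign once `N > -s₁`, `P` has `n + 1` simple real
roots strictly interlacing the `sᵢ`, so two roots `u < v` of `P` enclose some `sⱼ`, and
eliminating `c` gives `(u + N) g(u) f(v) = (v + N) g(v) f(u)`. Suppose `v - u ≤ d`. Then
`g(u) f(v) - f(u) g(v) ≠ 0`, as otherwise `u` and `v` would be roots, at distance at most `d`,
of the pencil member `g(u) f - f(u) g`; hence the relation expresses `N` as a continuous function of `(u, v)`, which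
is bounded on the compact set of such pairs with `v - u ≥ η`, for a fixed `η > 0` smaller than
all gaps between roots of `f g`. If instead `v - u < η`, then `sⱼ` is the only root of `f g` in
`[u, v]`, so `f(u) f(v) < 0 < g(u) g(v)`, contradicting the relation. So for large
`N` all gaps between roots exceed `d`.
-/

open Filter Finset Asymptotics

lemma rootSep_le_s7 {p : ℝ[X]} {u v : ℝ} (hu : p.IsRoot u) (hv : p.IsRoot v) (huv : u ≠ v) :
    rootSep p ≤ ENNReal.ofReal |u - v| :=
  iInf₂_le_of_le u v <| iInf₂_le_of_le hu hv <| iInf_le _ huv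

lemma lt_abs_sub_of_ofReal_lt_rootSep {p : ℝ[X]} {d : ℝ} (h : ENNReal.ofReal d < rootSep p)
    {u v : ℝ} (hu : p.IsRoot u) (hv : p.IsRoot v) (huv : u ≠ v) : d < |u - v| :=
  (ENNReal.ofReal_lt_ofReal_iff (abs_pos.2 (sub_ne_zero.2 huv))).1 <|
    h.trans_le (rootSep_le_s7 hu hv huv)

lemma ofReal_lt_rootSep_of_forall {p : ℝ[X]} (hp : p ≠ 0) {d : ℝ}
    (h : ∀ u v, p.IsRoot u → p.IsRoot v → u < v → d < v - u) :
    ENNReal.ofReal d < rootSep p := by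
  have habs : ∀ u v, p.IsRoot u → p.IsRoot v → u ≠ v → d < |u - v| := fun u v hu hv huv => by
    rcases huv.lt_or_gt with huv | huv
    · rw [abs_sub_comm, abs_of_pos (sub_pos.2 huv)]; exact h u v hu hv huv
    · rw [abs_of_pos (sub_pos.2 huv)]; exact h v u hv hu huv
  -- a positive number above `d`, together with the finitely many gaps between roots
  set D : Finset ℝ := insert (|d| + 1) ((((p.roots.toFinset ×ˢ p.roots.toFinset).filter
    fun q => q.1 ≠ q.2)).image fun q => |q.1 - q.2|)
  have hD : ∀ x ∈ D, d < x ∧ 0 < x := by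
    simp only [D, mem_insert, mem_image, mem_filter, mem_product, Multiset.mem_toFinset,
      mem_roots hp]
    rintro x (rfl | ⟨⟨u, v⟩, ⟨⟨hu, hv⟩, huv⟩, rfl⟩)
    · constructor <;> linarith [le_abs_self d, abs_nonneg d]
    · exact ⟨habs u v hu hv huv, abs_pos.2 (sub_ne_zero.2 huv)⟩
  have hne : D.Nonempty := insert_nonempty _ _
  calc ENNReal.ofReal d < ENNReal.ofReal (D.min' hne) :=
        (ENNReal.ofReal_lt_ofReal_iff (hD _ (D.min'_mem hne)).2).2 (hD _ (D.min'_mem hne)).1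
    _ ≤ rootSep p := by
        refine le_iInf₂ fun u v => le_iInf₂ fun hu hv => le_iInf fun huv => ?_
        refine ENNReal.ofReal_le_ofReal
          (D.min'_le _ (mem_insert_of_mem (mem_image.2 ⟨(u, v), ?_, rfl⟩)))
        simpa [mem_roots hp] using ⟨⟨hu, hv⟩, huv⟩

lemma exists_pos_lt_abs_sub_of_isRoot {p : ℝ[X]} (hp : p ≠ 0) :
    ∃ η > 0, ∀ u v, p.IsRoot u → p.IsRoot v → u ≠ v → η < |u - v| := by
  have h0 : ENNReal.ofReal 0 < rootSep p :=
    ofReal_lt_rootSep_of_forall hp fun u v _ _ huv => sub_pos.2 huv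
  obtain ⟨η, -, hη, hηp⟩ := ENNReal.lt_iff_exists_real_btwn.1 h0
  exact ⟨η, by simpa using hη, fun u v => lt_abs_sub_of_ofReal_lt_rootSep hηp⟩

lemma rootSep_zero : rootSep 0 = 0 :=
  le_antisymm (ENNReal.le_of_forall_pos_le_add fun ε hε _ => by
    simpa using rootSep_le_s7 (p := 0) (u := ε) (v := 0) (by simp) (by simp)
      (by exact_mod_cast hε.ne')) bot_le

lemma rootSep_smul {c : ℝ} (hc : c ≠ 0) (p : ℝ[X]) : rootSep (c • p) = rootSep p := by
  simp [rootSep, hc]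

lemma SimpleRealRoots.smul {p : ℝ[X]} (hp : SimpleRealRoots p) {c : ℝ} (hc : c ≠ 0) :
    SimpleRealRoots (c • p) := by
  obtain ⟨hp0, hcard, hnodup⟩ := hp
  exact ⟨smul_ne_zero hc hp0, by rwa [roots_smul_nonzero _ hc, natDegree_smul _ hc],
    by rwa [roots_smul_nonzero _ hc]⟩

lemma simpleRealRoots_of_roots_eq_map {p : ℝ[X]} (hp : p ≠ 0) {k : ℕ} {r : Fin k → ℝ}
    (hr : Function.Injective r) (hroots : p.roots = univ.val.map r) (hdeg : p.natDegree = k) :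
    SimpleRealRoots p :=
  ⟨hp, by simp [hroots, hdeg], hroots ▸ univ.nodup.map hr⟩

lemma roots_eq_map_of_injective {R ι : Type*} [CommRing R] [IsDomain R] [Fintype ι] {p : R[X]}
    (hp : p ≠ 0) (hdeg : p.natDegree ≤ Fintype.card ι) {r : ι → R} (hr : Function.Injective r)
    (hroot : ∀ i, p.IsRoot (r i)) : p.roots = univ.val.map r := by
  have hnodup : (univ.val.map r).Nodup := univ.nodup.map hr
  refine (Multiset.eq_of_le_of_card_le ((Multiset.le_iff_subset hnodup).2 ?_) ?_).symm
  · intro x hx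
    obtain ⟨i, -, rfl⟩ := Multiset.mem_map.1 hx
    exact (mem_roots hp).2 (hroot i)
  · simpa using p.card_roots'.trans hdeg

lemma Polynomial.Monic.eq_prod_X_sub_C {R ι : Type*} [CommRing R] [IsDomain R] [Fintype ι]
    {p : R[X]} (hp : p.Monic) {r : ι → R} (hroots : p.roots = univ.val.map r)
    (hdeg : p.natDegree = Fintype.card ι) : p = ∏ i, (X - C (r i)) := by
  have hcard : p.roots.card = p.natDegree := by simp [hroots, hdeg]
  conv_lhs => rw [← prod_multiset_X_sub_C_of_monic_of_roots_card_eq hp hcard, hroots]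
  rw [Multiset.map_map]
  rfl

lemma neg_one_pow_card_mul_prod_sub_pos {ι : Type*} [Fintype ι] (r : ι → ℝ) {x : ℝ}
    (hx : ∀ i, r i ≠ x) : 0 < (-1) ^ #{i | x < r i} * ∏ i, (x - r i) := by
  rw [← prod_filter_mul_prod_filter_not univ (fun i => x < r i)]
  have hneg : ∏ i ∈ univ.filter (fun i => x < r i), (x - r i) =
      (-1) ^ #{i | x < r i} * ∏ i ∈ univ.filter (fun i => x < r i), (r i - x) := by
    rw [← prod_neg]; simp
  rw [hneg, ← mul_assoc, ← mul_assoc, ← mul_pow, neg_one_mul, neg_neg, one_pow, one_mul]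
  refine mul_pos (prod_pos fun i hi => ?_) (prod_pos fun i hi => ?_)
  · simpa using (mem_filter.1 hi).2
  · exact sub_pos.2 ((not_lt.1 (mem_filter.1 hi).2).lt_of_ne (hx i))

lemma prod_sub_mul_prod_sub_pos {ι : Type*} [Fintype ι] {r : ι → ℝ} {u v : ℝ} (huv : u ≤ v)
    (h : ∀ i, r i < u ∨ v < r i) : 0 < (∏ i, (u - r i)) * ∏ i, (v - r i) := by
  rw [← prod_mul_distrib]
  exact prod_pos fun i _ => by rcases h i with h | h <;> nlinarith

lemma prod_sub_mul_prod_sub_neg {ι : Type*} [Fintype ι] [DecidableEq ι] {r : ι → ℝ} {u v : ℝ}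
    {j : ι} (hu : u < r j) (hv : r j < v) (h : ∀ i ≠ j, r i < u ∨ v < r i) :
    (∏ i, (u - r i)) * ∏ i, (v - r i) < 0 := by
  rw [← prod_mul_distrib, ← mul_prod_erase _ _ (mem_univ j)]
  refine mul_neg_of_neg_of_pos (mul_neg_of_neg_of_pos (by linarith) (by linarith)) ?_
  exact prod_pos fun i hi => by rcases h i (ne_of_mem_erase hi) with h | h <;> nlinarith

lemma exists_isRoot_of_eval_mul_eval_neg {p : ℝ[X]} {a b : ℝ} (hab : a ≤ b)
    (h : p.eval a * p.eval b < 0) : ∃ x ∈ Set.Ioo a b, p.IsRoot x := by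
  have hc : ContinuousOn (fun x => p.eval x) (Set.Icc a b) := p.continuous.continuousOn
  rcases mul_neg_iff.1 h with ⟨ha, hb⟩ | ⟨ha, hb⟩
  · exact intermediate_value_Ioo' hab hc ⟨hb, ha⟩
  · exact intermediate_value_Ioo hab hc ⟨ha, hb⟩

lemma exists_roots_of_alternating_sign {p : ℝ[X]} (hp : p ≠ 0) {k : ℕ} (hdeg : p.natDegree ≤ k)
    {x : Fin (k + 1) → ℝ} (hx : StrictMono x)
    (hsign : ∀ i : Fin (k + 1), 0 < (-1) ^ (k - i : ℕ) * p.eval (x i)) :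
    ∃ r : Fin k → ℝ, p.roots = univ.val.map r ∧ ∀ i, x i.castSucc < r i ∧ r i < x i.succ := by
  have hchange : ∀ i : Fin k, p.eval (x i.castSucc) * p.eval (x i.succ) < 0 := by
    intro i
    have hsq : ((-1 : ℝ) ^ (k - i.succ : ℕ)) * (-1) ^ (k - i.succ : ℕ) = 1 := by
      rw [← mul_pow]; norm_num
    have h1 := hsign i.castSucc
    rw [show k - (i.castSucc : ℕ) = (k - i.succ) + 1 by simp; omega, pow_succ] at h1
    nlinarith [mul_pos h1 (hsign i.succ)]
  choose r hr hroot using fun i => exists_isRoot_of_eval_mul_eval_neg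
    (hx Fin.castSucc_lt_succ).le (hchange i)
  have hmono : StrictMono r := fun a b hab =>
    (hr a).2.trans ((hx.monotone (Fin.succ_le_castSucc_iff.2 hab)).trans_lt (hr b).1)
  exact ⟨r, roots_eq_map_of_injective hp (by simpa using hdeg) hmono.injective hroot, hr⟩

lemma Polynomial.Monic.eventually_atBot_neg_one_pow_mul_eval_pos {p : ℝ[X]} (hp : p.Monic) :
    ∀ᶠ x in atBot, 0 < (-1) ^ p.natDegree * p.eval x := by
  refine ((IsEquivalent.refl (u := fun _ => (-1 : ℝ) ^ p.natDegree)).mul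
    p.isEquivalent_atBot_lead).eventually_pos ?_
  filter_upwards [eventually_lt_atBot 0] with x hx
  simpa [hp.leadingCoeff, ← mul_pow] using pow_pos (neg_pos.2 hx) p.natDegree

lemma Polynomial.Monic.eventually_atTop_eval_pos {p : ℝ[X]} (hp : p.Monic) :
    ∀ᶠ x in atTop, 0 < p.eval x := by
  refine p.isEquivalent_atTop_lead.eventually_pos ?_
  filter_upwards [eventually_gt_atTop 0] with x hx
  simpa [hp.leadingCoeff] using pow_pos hx p.natDegree

lemma Polynomial.Monic.exists_roots_interlacing {p : ℝ[X]} (hp : p.Monic) {k : ℕ}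
    (hdeg : p.natDegree = k + 1) {s : Fin k → ℝ} (hs : StrictMono s)
    (hsign : ∀ j : Fin k, 0 < (-1) ^ (k - j : ℕ) * p.eval (s j)) :
    ∃ r : Fin (k + 1) → ℝ, p.roots = univ.val.map r ∧ ∀ j, r j.castSucc < s j ∧ s j < r j.succ := by
  obtain ⟨y, hy, hys⟩ := (hp.eventually_atBot_neg_one_pow_mul_eval_pos.and
    (eventually_all.2 fun j => eventually_lt_atBot (s j))).exists
  obtain ⟨z, hz, hyz, hsz⟩ := (hp.eventually_atTop_eval_pos.and ((eventually_gt_atTop y).and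
    (eventually_all.2 fun j => eventually_gt_atTop (s j)))).exists
  -- sample points `y < s 0 < ⋯ < s (k - 1) < z` at which `p` alternates in sign
  set x : Fin (k + 2) → ℝ := Fin.cons y (Fin.snoc s z)
  have hx : StrictMono x := by
    refine Fin.strictMono_cons.2
      ⟨Fin.lastCases (by simpa using hyz) fun j => by simpa using hys j, ?_⟩
    rw [← Fin.insertNth_last', Fin.strictMono_insertNth_iff]
    exact ⟨hs, fun j _ => hsz j, fun j h => absurd h (by simp)⟩
  have hsign' : ∀ i : Fin (k + 2), 0 < (-1) ^ (k + 1 - i : ℕ) * p.eval (x i) := by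
    refine Fin.cases ?_ (Fin.lastCases ?_ fun j => ?_)
    · simpa [x, hdeg] using hy
    · simpa [x] using hz
    · simpa [x] using hsign j
  obtain ⟨r, hroots, hr⟩ := exists_roots_of_alternating_sign hp.ne_zero hdeg.le hx hsign'
  refine ⟨r, hroots, fun j => ⟨?_, ?_⟩⟩
  · simpa [x] using (hr j.castSucc).2
  · simpa [x, ← Fin.succ_castSucc] using (hr j.succ).1

lemma monic_and_natDegree_C_mul_add_X_add_C_mul {f g : ℝ[X]} (hg : g.Monic)
    (hfg : f.natDegree ≤ g.natDegree) (c N : ℝ) :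
    (C c * f + (X + C N) * g).Monic ∧ (C c * f + (X + C N) * g).natDegree = g.natDegree + 1 := by
  have hXg : ((X + C N) * g).Monic := (monic_X_add_C N).mul hg
  have hdeg : ((X + C N) * g).natDegree = g.natDegree + 1 := by
    rw [(monic_X_add_C N).natDegree_mul hg, natDegree_X_add_C, add_comm]
  have hlt : (C c * f).degree < ((X + C N) * g).degree :=
    degree_lt_degree (by rw [hdeg]; exact (natDegree_C_mul_le c f).trans_lt (by omega))
  exact ⟨hXg.add_of_right hlt, by rw [natDegree_add_eq_right_of_degree_lt hlt, hdeg]⟩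

lemma interlacing_iff {n : ℕ} {s t : Fin n → ℝ} (hs : StrictMono s) (h₁ : ∀ i, s i < t i)
    (h₂ : ∀ i j : Fin n, (j : ℕ) = (i : ℕ) + 1 → t i < s j) :
    (∀ i j, s i < t j ↔ i ≤ j) ∧ (∀ i j, t j < s i ↔ j < i) := by
  have hle : ∀ i j, i ≤ j → s i < t j := fun i j h => (hs.monotone h).trans_lt (h₁ j)
  have hlt : ∀ i j, j < i → t j < s i := fun i j h =>
    (h₂ j ⟨j + 1, by omega⟩ rfl).trans_le (hs.monotone (Fin.le_iff_val_le_val.2 h))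
  exact ⟨fun i j => ⟨fun h => not_lt.1 fun hji => lt_asymm h (hlt i j hji), hle i j⟩,
    fun i j => ⟨fun h => not_le.1 fun hij => lt_asymm h (hle i j hij), hlt i j⟩⟩

lemma exists_between_of_interlacing {k : ℕ} {r : Fin (k + 1) → ℝ} {s : Fin k → ℝ}
    (h : ∀ j, r j.castSucc < s j ∧ s j < r j.succ) {a b : Fin (k + 1)} (hab : r a < r b) :
    ∃ j, r a < s j ∧ s j < r b := by
  have hr : StrictMono r := Fin.strictMono_iff_lt_succ.2 fun j => (h j).1.trans (h j).2
  have hab' : a < b := hr.lt_iff_lt.1 hab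
  obtain ⟨j, rfl⟩ := Fin.exists_castSucc_eq.2 (Fin.ne_last_of_lt hab')
  exact ⟨j, (h j).1, (h j).2.trans_le (hr.monotone (Fin.castSucc_lt_iff_succ_le.1 hab'))⟩

section Pencil

variable {f g : ℝ[X]} {d : ℝ}
  (hd : ∀ a b : ℝ, (a, b) ≠ (0, 0) → ENNReal.ofReal d < rootSep (a • f + b • g))
include hd

lemma cross_ne_zero_of_lt_rootSep {u v : ℝ} (hu : f.eval u ≠ 0 ∨ g.eval u ≠ 0) (huv : u ≠ v)
    (hduv : |u - v| ≤ d) : g.eval u * f.eval v - f.eval u * g.eval v ≠ 0 := by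
  intro hW
  -- `u` and `v` are both roots of the pencil member `g(u) • f - f(u) • g`
  have hab : (g.eval u, -f.eval u) ≠ (0, 0) := by
    rcases hu with hu | hu <;> simp [hu]
  have := lt_abs_sub_of_ofReal_lt_rootSep (hd _ _ hab) (u := u) (v := v)
    (by simp; ring) (by simp; linarith) huv
  linarith

lemma exists_forall_le_of_isCompact (hfg : ∀ x, f.eval x ≠ 0 ∨ g.eval x ≠ 0) {K : Set (ℝ × ℝ)}
    (hK : IsCompact K) (hKd : ∀ q ∈ K, q.1 ≠ q.2 ∧ |q.1 - q.2| ≤ d) :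
    ∃ N₁, ∀ q ∈ K, ∀ N,
      (q.1 + N) * g.eval q.1 * f.eval q.2 = (q.2 + N) * g.eval q.2 * f.eval q.1 → N ≤ N₁ := by
  have hW : ∀ q ∈ K, g.eval q.1 * f.eval q.2 - f.eval q.1 * g.eval q.2 ≠ 0 := fun q hq =>
    cross_ne_zero_of_lt_rootSep hd (hfg q.1) (hKd q hq).1 (hKd q hq).2
  -- the relation determines `N` as a continuous function of `q` on `K`
  obtain ⟨N₁, hN₁⟩ := hK.bddAbove_image (f := fun q : ℝ × ℝ =>
    (q.2 * g.eval q.2 * f.eval q.1 - q.1 * g.eval q.1 * f.eval q.2) /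
      (g.eval q.1 * f.eval q.2 - f.eval q.1 * g.eval q.2))
    (ContinuousOn.div (by fun_prop) (by fun_prop) hW)
  refine ⟨N₁, fun q hq N hN => hN₁ ⟨q, hq, ?_⟩⟩
  rw [div_eq_iff (hW q hq)]
  linear_combination (-1) * hN

end Pencil

section Interlacing

variable {m : ℕ} {f g : ℝ[X]} {s t : Fin (m + 1) → ℝ}
  (hf : f = ∏ i, (X - C (s i))) (hg : g = ∏ i, (X - C (t i)))
  (hs : StrictMono s) (hst : ∀ i j, s i < t j ↔ i ≤ j) (hts : ∀ i j, t j < s i ↔ j < i)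
  {d : ℝ} (hd : ∀ a b : ℝ, (a, b) ≠ (0, 0) → ENNReal.ofReal d < rootSep (a • f + b • g))

include hst hts in
lemma ne_of_interlacing (i j : Fin (m + 1)) : s i ≠ t j := by
  rcases le_or_gt i j with hij | hij
  · exact ((hst i j).2 hij).ne
  · exact ((hts i j).2 hij).ne'

include hf hg hst hts in
lemma eval_ne_zero_or_eval_ne_zero (x : ℝ) : f.eval x ≠ 0 ∨ g.eval x ≠ 0 := by
  by_contra! h
  have hx : f.IsRoot x ∧ g.IsRoot x := h
  simp only [hf, hg, isRoot_prod, root_X_sub_C, mem_univ, true_and] at hx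
  obtain ⟨⟨i, rfl⟩, ⟨j, hj⟩⟩ := hx
  exact ne_of_interlacing hst hts i j hj.symm

include hg hst hts in
lemma neg_one_pow_mul_eval_pos (j : Fin (m + 1)) : 0 < (-1) ^ (m + 1 - j : ℕ) * g.eval (s j) := by
  have hcard : #{k | s j < t k} = m + 1 - j := by
    rw [← Fin.card_Ici]
    congr 1
    ext k
    simp [hst]
  simpa [hcard, hg, eval_prod] using
    neg_one_pow_card_mul_prod_sub_pos t fun k => (ne_of_interlacing hst hts j k).symm

include hf in
lemma natDegree_eq_of_eq_prod : f.natDegree = m + 1 := by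
  simp [hf, natDegree_prod_of_monic _ _ fun i _ => monic_X_sub_C (s i)]

include hf hg in
lemma monic_and_natDegree_perturbation (c N : ℝ) :
    (C c * f + (X + C N) * g).Monic ∧ (C c * f + (X + C N) * g).natDegree = m + 2 := by
  have hgd := natDegree_eq_of_eq_prod hg
  have h := monic_and_natDegree_C_mul_add_X_add_C_mul (hg ▸ monic_prod_X_sub_C _ _)
    (by rw [natDegree_eq_of_eq_prod hf, hgd]) c N
  rwa [hgd] at h

include hf hg hs hst hts in
lemma exists_roots_interlacing_of_lt {N : ℝ} (hN : -s 0 < N) (c : ℝ) :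
    ∃ r : Fin (m + 2) → ℝ, (C c * f + (X + C N) * g).roots = univ.val.map r ∧
      ∀ j, r j.castSucc < s j ∧ s j < r j.succ := by
  obtain ⟨hPm, hPd⟩ := monic_and_natDegree_perturbation hf hg c N
  refine hPm.exists_roots_interlacing hPd hs fun j => ?_
  have hfj : f.eval (s j) = 0 := by
    simpa [hf] using (isRoot_prod _ _ _).2 ⟨j, mem_univ _, root_X_sub_C.2 rfl⟩
  have hsN : 0 < s j + N := by linarith [hs.monotone (Fin.zero_le j)]
  have := mul_pos hsN (neg_one_pow_mul_eval_pos hg hst hts j)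
  simp only [eval_add, eval_mul, eval_C, hfj, eval_X, mul_zero, zero_add]
  linarith

include hf hg hs hst hts in
lemma eval_mul_eval_neg_and_pos_of_near {η : ℝ}
    (hη : ∀ z w, (f * g).IsRoot z → (f * g).IsRoot w → z ≠ w → η < |z - w|) {j : Fin (m + 1)}
    {u v : ℝ} (hju : u < s j) (hjv : s j < v) (huv : v - u < η) :
    f.eval u * f.eval v < 0 ∧ 0 < g.eval u * g.eval v := by
  have hroots : ∀ z, (f * g).IsRoot z ↔ (∃ i, s i = z) ∨ ∃ k, t k = z := by
    simp only [root_mul, hf, hg, isRoot_prod, root_X_sub_C, mem_univ, true_and, implies_true]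
  have hout : ∀ z, (f * g).IsRoot z → z ≠ s j → z < u ∨ v < z := by
    intro z hz hzj
    by_contra! h
    have := hη z (s j) hz ((hroots _).2 (.inl ⟨j, rfl⟩)) hzj
    linarith [abs_sub_lt_iff.2 (⟨by linarith, by linarith⟩ : z - s j < η ∧ s j - z < η)]
  simp only [hf, hg, eval_prod, eval_sub, eval_X, eval_C]
  exact ⟨prod_sub_mul_prod_sub_neg hju hjv fun i hi =>
      hout _ ((hroots _).2 (.inl ⟨i, rfl⟩)) (hs.injective.ne hi),
    prod_sub_mul_prod_sub_pos (hju.trans hjv).le fun k =>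
      hout _ ((hroots _).2 (.inr ⟨k, rfl⟩)) (ne_of_interlacing hst hts j k).symm⟩

include hf hg hs hst hts hd in
lemma exists_forall_lt_sub_of_isRoot : ∃ N₀, ∀ N, N₀ < N → ∀ c u v,
    (C c * f + (X + C N) * g).IsRoot u → (C c * f + (X + C N) * g).IsRoot v → u < v →
      (∃ j, u < s j ∧ s j < v) → d < v - u := by
  have hfg0 : f * g ≠ 0 := by simp [hf, hg, Monic.ne_zero, monic_prod_X_sub_C]
  obtain ⟨η, hη, hηfg⟩ := exists_pos_lt_abs_sub_of_isRoot hfg0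
  set K : Set (ℝ × ℝ) := ⋃ j, (Set.Icc (s j - d) (s j) ×ˢ Set.Icc (s j) (s j + d)) ∩
    (fun q => q.2 - q.1) ⁻¹' Set.Icc η d
  have hK : IsCompact K := isCompact_iUnion fun j =>
    (isCompact_Icc.prod isCompact_Icc).inter_right (isClosed_Icc.preimage (by fun_prop))
  obtain ⟨N₁, hN₁⟩ := exists_forall_le_of_isCompact hd
    (eval_ne_zero_or_eval_ne_zero hf hg hst hts) hK fun q hq => by
      obtain ⟨j, -, hηq, hdq⟩ := Set.mem_iUnion.1 hq
      have hpos : 0 < q.2 - q.1 := hη.trans_le hηq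
      exact ⟨by linarith, by rwa [abs_sub_comm, abs_of_pos hpos]⟩
  refine ⟨max N₁ (η - s 0), fun N hN c u v hu hv huv ⟨j, hju, hjv⟩ => ?_⟩
  have hrel : (u + N) * g.eval u * f.eval v = (v + N) * g.eval v * f.eval u := by
    simp only [IsRoot.def, eval_add, eval_mul, eval_C, eval_X] at hu hv
    linear_combination f.eval v * hu - f.eval u * hv
  by_contra! hvu
  rcases le_or_gt η (v - u) with hfar | hnear
  · have := hN₁ (u, v) (Set.mem_iUnion.2 ⟨j, ⟨⟨by linarith, hju.le⟩, hjv.le, by linarith⟩,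
      hfar, hvu⟩) N hrel
    linarith [le_max_left N₁ (η - s 0)]
  · obtain ⟨hfuv, hguv⟩ := eval_mul_eval_neg_and_pos_of_near hf hg hs hst hts hηfg hju hjv hnear
    have hN' := (le_max_right N₁ (η - s 0)).trans_lt hN
    have hs0 := hs.monotone (Fin.zero_le j)
    have hpos : 0 < (u + N) * (v + N) := mul_pos (by linarith) (by linarith)
    have hneg : ((u + N) * g.eval u * f.eval v) * ((v + N) * g.eval v * f.eval u) < 0 := by
      rw [show ((u + N) * g.eval u * f.eval v) * ((v + N) * g.eval v * f.eval u) =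
        (u + N) * (v + N) * (g.eval u * g.eval v) * (f.eval u * f.eval v) by ring]
      exact mul_neg_of_pos_of_neg (mul_pos hpos hguv) hfuv
    rw [hrel] at hneg
    exact (mul_self_nonneg _).not_gt hneg

include hf hg hs hst hts hd in
lemma exists_forall_simpleRealRoots_and_lt_rootSep : ∃ N₀, ∀ N, N₀ < N → ∀ c,
    SimpleRealRoots (C c * f + (X + C N) * g) ∧
      ENNReal.ofReal d < rootSep (C c * f + (X + C N) * g) := by
  obtain ⟨N₁, hN₁⟩ := exists_forall_lt_sub_of_isRoot hf hg hs hst hts hd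
  refine ⟨max N₁ (-s 0), fun N hN c => ?_⟩
  obtain ⟨hPm, hPd⟩ := monic_and_natDegree_perturbation hf hg c N
  obtain ⟨r, hroots, hr⟩ :=
    exists_roots_interlacing_of_lt hf hg hs hst hts ((le_max_right _ _).trans_lt hN) c
  have hmem : ∀ x, (C c * f + (X + C N) * g).IsRoot x ↔ ∃ i, r i = x := fun x => by
    simp only [← mem_roots hPm.ne_zero, hroots, Multiset.mem_map, mem_val, mem_univ, true_and]
  have hr_mono : StrictMono r := Fin.strictMono_iff_lt_succ.2 fun j => (hr j).1.trans (hr j).2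
  refine ⟨simpleRealRoots_of_roots_eq_map hPm.ne_zero hr_mono.injective hroots hPd,
    ofReal_lt_rootSep_of_forall hPm.ne_zero fun u v hu hv huv => ?_⟩
  obtain ⟨a, rfl⟩ := (hmem u).1 hu
  obtain ⟨b, rfl⟩ := (hmem v).1 hv
  exact hN₁ N ((le_max_left _ _).trans_lt hN) c _ _ hu hv huv
    (exists_between_of_interlacing hr huv)

end Interlacing

theorem stmt7 (n : ℕ) (f g : Polynomial ℝ) (hfm : f.Monic) (hgm : g.Monic)
    (hfd : f.natDegree = n) (hgd : g.natDegree = n)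
    (s t : Fin n → ℝ) (hs : StrictMono s) (ht : StrictMono t)
    (hfs : ∀ x : ℝ, f.IsRoot x ↔ ∃ i, s i = x)
    (hgt : ∀ x : ℝ, g.IsRoot x ↔ ∃ i, t i = x)
    (hint1 : ∀ i, s i < t i)
    (hint2 : ∀ i j : Fin n, (j : ℕ) = (i : ℕ) + 1 → t i < s j)
    (d : ℝ)
    (hd : ∀ a b : ℝ, (a, b) ≠ (0, 0) → ENNReal.ofReal d < rootSep (a • f + b • g)) :
    ∃ N₀ : ℝ, ∀ N : ℝ, N₀ < N → ∀ a b : ℝ, (a, b) ≠ (0, 0) →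
      SimpleRealRoots (a • f + b • ((Polynomial.X + Polynomial.C N) * g)) ∧
      ENNReal.ofReal d < rootSep (a • f + b • ((Polynomial.X + Polynomial.C N) * g)) := by
  rcases n with _ | m
  · -- for `n = 0` the pencil contains `f - g = 0`
    have h := hd 1 (-1) (by simp)
    rw [hfm.natDegree_eq_zero.1 hfd, hgm.natDegree_eq_zero.1 hgd] at h
    simp [rootSep_zero] at h
  have hfroots := roots_eq_map_of_injective hfm.ne_zero (by simp [hfd]) hs.injective
    fun i => (hfs _).2 ⟨i, rfl⟩
  have hgroots := roots_eq_map_of_injective hgm.ne_zero (by simp [hgd]) ht.injective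
    fun i => (hgt _).2 ⟨i, rfl⟩
  obtain ⟨hst, hts⟩ := interlacing_iff hs hint1 hint2
  obtain ⟨N₀, hN₀⟩ := exists_forall_simpleRealRoots_and_lt_rootSep
    (hfm.eq_prod_X_sub_C hfroots (by simp [hfd])) (hgm.eq_prod_X_sub_C hgroots (by simp [hgd]))
    hs hst hts hd
  refine ⟨N₀, fun N hN a b hab => ?_⟩
  rcases eq_or_ne b 0 with rfl | hb
  · have ha : a ≠ 0 := by rintro rfl; exact hab rfl
    have hdf := hd 1 0 (by simp)
    simp only [one_smul, zero_smul, add_zero] at hdf ⊢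
    exact ⟨(simpleRealRoots_of_roots_eq_map hfm.ne_zero hs.injective hfroots hfd).smul ha,
      (rootSep_smul ha f).symm ▸ hdf⟩
  have hP : a • f = b • (C (a / b) * f) := by
    rw [smul_eq_C_mul, smul_eq_C_mul, ← mul_assoc, ← C_mul, mul_div_cancel₀ a hb]
  obtain ⟨hsimple, hsep⟩ := hN₀ N hN (a / b)
  rw [hP, ← smul_add, rootSep_smul hb]
  exact ⟨hsimple.smul hb, hsep⟩
end
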